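/- Let A be a 2×2 positive definite complex matrix and let P, R be 2×2 positive semidefinite complex matrices. Then tr(A·R²)·tr(A^{−1}·P²) ≥ ‖P·R‖_tr², where ‖X‖_tr = tr(√(X†X)) is the trace norm. -/

import Mathlib

open Matrix Kronecker Complex
open scoped ComplexOrder

abbrev Q2 : Type := Fin 2 × Fin 2
abbrev Q3 : Type := Fin 2 × Fin 2 × Fin 2

noncomputable section

/-- A two-qubit state: positive semidefinite with trace one. -/
def IsState2 (ρ : Matrix Q2 Q2 ℂ) : Prop := ρ.PosSemidef ∧ ρ.trace = 1

/-- A three-qubit state: positive semidefinite with trace one. -/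
def IsState3 (ρ : Matrix Q3 Q3 ℂ) : Prop := ρ.PosSemidef ∧ ρ.trace = 1

/-- Partial trace over the first qubit (system A) of a two-qubit operator. -/
def ptraceA (ρ : Matrix Q2 Q2 ℂ) : Matrix (Fin 2) (Fin 2) ℂ :=
  Matrix.of fun b b' => ∑ a, ρ (a, b) (a, b')

/-- Partial trace over the middle qubit (system B) of a three-qubit operator;
the result is indexed by the systems (A, B'). -/
def ptraceB3 (ρ : Matrix Q3 Q3 ℂ) : Matrix Q2 Q2 ℂ :=
  Matrix.of fun p q => ∑ b, ρ (p.1, b, p.2) (q.1, b, q.2)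

/-- Partial trace over the last qubit (system B') of a three-qubit operator;
the result is indexed by the systems (A, B). -/
def ptraceB'3 (ρ : Matrix Q3 Q3 ℂ) : Matrix Q2 Q2 ℂ :=
  Matrix.of fun p q => ∑ c, ρ (p.1, p.2, c) (q.1, q.2, c)

/-- A two-qubit state admits a symmetric extension if there is a three-qubit state whose
AB and AB' marginals both equal it. -/
def SymExt (ρ : Matrix Q2 Q2 ℂ) : Prop :=
  ∃ τ : Matrix Q3 Q3 ℂ, IsState3 τ ∧ ptraceB'3 τ = ρ ∧ ptraceB3 τ = ρ

/-- f(ρ) = tr(ρ_B²) − tr(ρ²) + 4√(det ρ). -/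
def fC (ρ : Matrix Q2 Q2 ℂ) : ℝ :=
  ((ptraceA ρ * ptraceA ρ).trace).re - ((ρ * ρ).trace).re + 4 * Real.sqrt ρ.det.re

/-- The rank-one projector |ψ⟩⟨ψ|. -/
def proj {n : Type*} (ψ : n → ℂ) : Matrix n n ℂ := Matrix.vecMulVec ψ (star ψ)

/-- A two-qubit state admits a pure symmetric extension. -/
def PureSymExt (ρ : Matrix Q2 Q2 ℂ) : Prop :=
  ∃ ψ : Q3 → ℂ, (∑ x, Complex.normSq (ψ x)) = 1 ∧
    ptraceB'3 (proj ψ) = ρ ∧ ptraceB3 (proj ψ) = ρ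

/-- The multiset of nonzero eigenvalues (with multiplicity) of a complex matrix. -/
def nonzeroSpec {n : Type*} [Fintype n] [DecidableEq n] (M : Matrix n n ℂ) : Multiset ℂ :=
  M.charpoly.roots.filter (· ≠ 0)

/-- The trace norm ‖X‖_tr = tr √(X†X) of a 2×2 complex matrix. -/
def trNorm (X : Matrix (Fin 2) (Fin 2) ℂ) : ℝ :=
  ((((Matrix.posSemidef_conjTranspose_mul_self X).1.eigenvectorUnitary : Matrix (Fin 2) (Fin 2) ℂ) *
      diagonal ((fun r : ℝ => (r : ℂ)) ∘ (√·) ∘ (Matrix.posSemidef_conjTranspose_mul_self X).1.eigenvalues) *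
      (star (Matrix.posSemidef_conjTranspose_mul_self X).1.eigenvectorUnitary :
        Matrix (Fin 2) (Fin 2) ℂ)).trace).re

/-- The supporting-hyperplane observable H_AB(σ) = √(det σ)·σ⁻¹ − σ + I₂⊗σ_B. -/
def HAB (σ : Matrix Q2 Q2 ℂ) : Matrix Q2 Q2 ℂ :=
  ((Real.sqrt σ.det.re : ℝ) : ℂ) • σ⁻¹ - σ + (1 : Matrix (Fin 2) (Fin 2) ℂ) ⊗ₖ ptraceA σ

/-!
Write `A = B²` with `B` Hermitian and put `X = P B⁻¹`, `Y = B R`, so that `P R = X Y`,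
`tr(A⁻¹ P²) = tr(X† X)` and `tr(A R²) = tr(Y Y†)`. For a 2×2 matrix `M` the eigenvalues of
`√(M† M)` give `‖M‖_tr² = tr(M† M) + 2 √det(M† M)`, so with `S = X† X`, `T = Y Y†` it suffices
that `tr(S T) + 2 √det(S T) ≤ tr S · tr T`. For 2×2 matrices `tr S · tr T - tr(S T) = tr(S adj T)`,
`adj T` is again positive semidefinite with `det (adj T) = det T`, and `tr(S U) ≥ 2 √det(S U)` for
positive semidefinite `S`, `U` is AM–GM for the eigenvalues of `√S U √S`.
-/

namespace Matrix

lemma trace_mul_adjugate_fin_two {R : Type*} [CommRing R] (S T : Matrix (Fin 2) (Fin 2) R) :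
    (S * adjugate T).trace = S.trace * T.trace - (S * T).trace := by
  simp only [adjugate_fin_two, trace_fin_two, mul_apply, Fin.sum_univ_two, of_apply, cons_val',
    cons_val_zero, cons_val_one, cons_val_fin_one, mul_neg]
  ring

variable {𝕜 : Type*} [RCLike 𝕜]

lemma PosSemidef.adjugate_fin_two {T : Matrix (Fin 2) (Fin 2) 𝕜} (hT : T.PosSemidef) :
    T.adjugate.PosSemidef := by
  have h : T.adjugate = !![0, 1; -1, 0] * Tᵀ * (!![0, 1; -1, 0] : Matrix (Fin 2) (Fin 2) 𝕜)ᴴ := by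
    ext i j
    fin_cases i <;> fin_cases j <;>
      simp [Matrix.adjugate_fin_two, mul_apply, vecMul, dotProduct, Fin.sum_univ_two]
  rw [h]
  exact hT.transpose.mul_mul_conjTranspose_same _

lemma PosSemidef.two_mul_sqrt_re_det_le_re_trace {X : Matrix (Fin 2) (Fin 2) 𝕜}
    (hX : X.PosSemidef) : 2 * √(RCLike.re X.det) ≤ RCLike.re X.trace := by
  have h0 := hX.eigenvalues_nonneg 0
  have h1 := hX.eigenvalues_nonneg 1
  rw [hX.1.det_eq_prod_eigenvalues, hX.1.trace_eq_sum_eigenvalues]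
  simp only [Fin.prod_univ_two, Fin.sum_univ_two, ← RCLike.ofReal_mul, ← RCLike.ofReal_add,
    RCLike.ofReal_re, Real.sqrt_mul h0]
  nlinarith [Real.sq_sqrt h0, Real.sq_sqrt h1,
    sq_nonneg (√(hX.1.eigenvalues 0) - √(hX.1.eigenvalues 1))]

open scoped MatrixOrder in
lemma PosSemidef.two_mul_sqrt_re_det_mul_le_re_trace_mul {S U : Matrix (Fin 2) (Fin 2) 𝕜}
    (hS : S.PosSemidef) (hU : U.PosSemidef) :
    2 * √(RCLike.re (S * U).det) ≤ RCLike.re (S * U).trace := by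
  set Q := CFC.sqrt S
  have hQ : Qᴴ = Q := (CFC.sqrt_nonneg S).posSemidef.1
  have hQQ : Q * Q = S := CFC.sqrt_mul_sqrt_self S hS.nonneg
  have h := (hU.conjTranspose_mul_mul_same Q).two_mul_sqrt_re_det_le_re_trace
  rwa [hQ, trace_mul_cycle, hQQ, det_mul, det_mul, mul_right_comm, ← det_mul, hQQ,
    ← det_mul] at h

lemma PosSemidef.re_trace_mul_add_two_mul_sqrt_le_re_trace_mul_re_trace {S T : Matrix (Fin 2) (Fin 2) 𝕜}
    (hS : S.PosSemidef) (hT : T.PosSemidef) :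
    RCLike.re (S * T).trace + 2 * √(RCLike.re (S * T).det) ≤
      RCLike.re S.trace * RCLike.re T.trace := by
  have h := hS.two_mul_sqrt_re_det_mul_le_re_trace_mul hT.adjugate_fin_two
  have hSim := (RCLike.nonneg_iff.mp hS.trace_nonneg).2
  rw [trace_mul_adjugate_fin_two, det_mul, det_adjugate, Fintype.card_fin, pow_one, ← det_mul,
    map_sub, RCLike.mul_re, hSim, zero_mul, sub_zero] at h
  linarith

open scoped MatrixOrder in
lemma PosDef.exists_sqrt {n : Type*} [Fintype n] [DecidableEq n] {A : Matrix n n 𝕜}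
    (hA : A.PosDef) : ∃ B : Matrix n n 𝕜, B.IsHermitian ∧ IsUnit B.det ∧ B * B = A := by
  have hBB : CFC.sqrt A * CFC.sqrt A = A := CFC.sqrt_mul_sqrt_self A hA.posSemidef.nonneg
  refine ⟨CFC.sqrt A, (CFC.sqrt_nonneg A).posSemidef.1, ?_, hBB⟩
  have h : IsUnit A.det := hA.det_pos.ne'.isUnit
  rw [← hBB, det_mul, IsUnit.mul_iff] at h
  exact h.1

end Matrix

open Matrix

lemma trNorm_sq (M : Matrix (Fin 2) (Fin 2) ℂ) :
    trNorm M ^ 2 = (Mᴴ * M).trace.re + 2 * √((Mᴴ * M).det.re) := by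
  have hM := (posSemidef_conjTranspose_mul_self M).1
  have h0 := eigenvalues_conjTranspose_mul_self_nonneg M 0
  have h1 := eigenvalues_conjTranspose_mul_self_nonneg M 1
  have h : trNorm M = √(hM.eigenvalues 0) + √(hM.eigenvalues 1) := by
    rw [trNorm, trace_mul_cycle, Unitary.coe_star_mul_self, one_mul, trace_diagonal,
      Fin.sum_univ_two]
    simp
  rw [h, hM.trace_eq_sum_eigenvalues, hM.det_eq_prod_eigenvalues]
  simp only [Fin.prod_univ_two, Fin.sum_univ_two, ← RCLike.ofReal_add, ← RCLike.ofReal_mul,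
    ← RCLike.re_to_complex, RCLike.ofReal_re]
  rw [Real.sqrt_mul h0, add_sq, Real.sq_sqrt h0, Real.sq_sqrt h1]
  ring

lemma trNorm_mul_sq_le (X Y : Matrix (Fin 2) (Fin 2) ℂ) :
    trNorm (X * Y) ^ 2 ≤ (Xᴴ * X).trace.re * (Y * Yᴴ).trace.re := by
  have h := (posSemidef_conjTranspose_mul_self X).re_trace_mul_add_two_mul_sqrt_le_re_trace_mul_re_trace
    (posSemidef_self_mul_conjTranspose Y)
  have htr : (Xᴴ * X * (Y * Yᴴ)).trace = ((X * Y)ᴴ * (X * Y)).trace := by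
    rw [conjTranspose_mul, ← mul_assoc, trace_mul_comm]
    simp only [mul_assoc]
  have hdet : (Xᴴ * X * (Y * Yᴴ)).det = ((X * Y)ᴴ * (X * Y)).det := by
    simp only [conjTranspose_mul, det_mul]
    ring
  rw [trNorm_sq, ← htr, ← hdet]
  exact h

/-- Cauchy–Schwarz-type inequality: tr(A·R²)·tr(A⁻¹·P²) ≥ ‖PR‖_tr² for A positive
definite and P, R positive semidefinite 2×2 matrices. -/
theorem trace_cauchy_schwarz (A P R : Matrix (Fin 2) (Fin 2) ℂ)
    (hA : A.PosDef) (hP : P.PosSemidef) (hR : R.PosSemidef) :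
    ((A * (R * R)).trace).re * ((A⁻¹ * (P * P)).trace).re ≥ trNorm (P * R) ^ 2 := by
  obtain ⟨B, hB, hBu, rfl⟩ := hA.exists_sqrt
  have hXY : P * B⁻¹ * (B * R) = P * R := by
    rw [mul_assoc, ← mul_assoc B⁻¹, nonsing_inv_mul B hBu, one_mul]
  have hX : ((P * B⁻¹)ᴴ * (P * B⁻¹)).trace = ((B * B)⁻¹ * (P * P)).trace := by
    rw [conjTranspose_mul, conjTranspose_nonsing_inv, hB, hP.1, Matrix.mul_inv_rev, ← mul_assoc,
      trace_mul_comm]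
    simp only [mul_assoc]
  have hY : ((B * R) * (B * R)ᴴ).trace = (B * B * (R * R)).trace := by
    rw [conjTranspose_mul, hR.1, hB, ← mul_assoc, trace_mul_comm]
    simp only [mul_assoc]
  have h := trNorm_mul_sq_le (P * B⁻¹) (B * R)
  rw [hXY, hX, hY] at h
  linarith
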